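/- arXiv:math/0402168 — 3 statements merged into one kernel-verified Lean document; each statement's English description precedes it below -/
import Mathlib

section
/- With η_n and γ_n as the coefficients of the Laurent expansions of −ζ'/ζ and ζ at s=1, one has η_2 = −γ_0^3 + 3γ_0γ_1 − 3γ_2. -/
/-!
Write `ζ(s + 1) = 1/s + F(s)` and `-ζ'(s + 1)/ζ(s + 1) = 1/s + G(s)`. Clearing denominators in
`G = -(1/s + F)'/(1/s + F) - 1/s` gives `G + F = -s (G F + F')`, and comparing coefficients of the
convergent expansions yields `η₀ = -γ₀` and `η_{n+1} = -(n + 2) γ_{n+1} - ∑_{i+j=n} η_i γ_j`.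
Two steps of this recurrence give `η₂`.
-/

open Filter FormalMultilinearSeries Finset
open scoped Topology

def HasPuncturedExpansion {𝕜 : Type*} [NontriviallyNormedField 𝕜] (c : ℕ → 𝕜) (h : 𝕜 → 𝕜) :
    Prop :=
  ∀ᶠ s in 𝓝[≠] (0 : 𝕜), HasSum (fun n => c n * s ^ n) (h s)

namespace HasPuncturedExpansion

variable {𝕜 : Type*} [NontriviallyNormedField 𝕜] {a b c e : ℕ → 𝕜} {f g : 𝕜 → 𝕜}

theorem congr (ha : HasPuncturedExpansion a f) (hfg : f =ᶠ[𝓝[≠] 0] g) :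
    HasPuncturedExpansion a g := by
  filter_upwards [ha, hfg] with s hs hfgs
  rwa [← hfgs]

theorem add (ha : HasPuncturedExpansion a f) (hb : HasPuncturedExpansion b g) :
    HasPuncturedExpansion (a + b) (f + g) := by
  filter_upwards [ha, hb] with s has hbs
  simpa only [Pi.add_apply, add_mul] using has.add hbs

theorem neg (ha : HasPuncturedExpansion a f) : HasPuncturedExpansion (-a) (-f) := by
  filter_upwards [ha] with s has
  simpa only [Pi.neg_apply, neg_mul] using has.neg

theorem shift (ha : HasPuncturedExpansion a f) :
    HasPuncturedExpansion (fun n => a (n + 1)) (fun s => (f s - a 0) / s) := by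
  filter_upwards [ha, self_mem_nhdsWithin] with s has (hs : s ≠ 0)
  have htail : HasSum (fun n => a (n + 1) * s ^ (n + 1)) (f s - a 0) := by
    simpa using (hasSum_nat_add_iff' 1).mpr has
  refine (htail.div_const s).congr_fun fun n => ?_
  field_simp
  ring

theorem radius_pos (ha : HasPuncturedExpansion a f) : 0 < (ofScalars 𝕜 a).radius := by
  obtain ⟨t, ht, ht0⟩ := (ha.and self_mem_nhdsWithin).exists
  have hbdd : ∀ᶠ n in atTop, ‖ofScalars 𝕜 a n‖ * (‖t‖₊ : ℝ) ^ n ≤ 1 := by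
    filter_upwards [(tendsto_zero_iff_norm_tendsto_zero.mp
      ht.summable.tendsto_atTop_zero).eventually_le_const one_pos] with n hn
    simpa [ofScalars_norm, norm_mul, norm_pow] using hn
  exact lt_of_lt_of_le (by simpa using ht0) ((ofScalars 𝕜 a).le_radius_of_eventually_le 1 hbdd)

theorem eventually_mem_eball (ha : HasPuncturedExpansion a f) :
    ∀ᶠ s in 𝓝[≠] (0 : 𝕜), s ∈ Metric.eball (0 : 𝕜) (ofScalars 𝕜 a).radius :=
  eventually_nhdsWithin_of_eventually_nhds (Metric.eball_mem_nhds 0 ha.radius_pos)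

theorem eventually_summable_norm (ha : HasPuncturedExpansion a f) :
    ∀ᶠ s in 𝓝[≠] (0 : 𝕜), Summable fun n => ‖a n * s ^ n‖ := by
  filter_upwards [ha.eventually_mem_eball] with s hs
  simpa [ofScalars_apply_eq, mul_comm] using (ofScalars 𝕜 a).summable_norm_apply hs

theorem mul (ha : HasPuncturedExpansion a f) (hb : HasPuncturedExpansion b g) :
    HasPuncturedExpansion (fun n => ∑ kl ∈ antidiagonal n, a kl.1 * b kl.2) (f * g) := by
  filter_upwards [ha, hb, ha.eventually_summable_norm, hb.eventually_summable_norm]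
    with s has hbs has' hbs'
  have hcauchy : ∀ n, ∑ kl ∈ antidiagonal n, a kl.1 * s ^ kl.1 * (b kl.2 * s ^ kl.2) =
      (∑ kl ∈ antidiagonal n, a kl.1 * b kl.2) * s ^ n := by
    intro n
    rw [sum_mul]
    refine sum_congr rfl fun kl hkl => ?_
    rw [← mem_antidiagonal.mp hkl, pow_add]
    ring
  simp_rw [← hcauchy]
  rw [Pi.mul_apply, ← has.tsum_eq, ← hbs.tsum_eq,
    tsum_mul_tsum_eq_tsum_sum_antidiagonal_of_summable_norm' has' has.summable hbs' hbs.summable]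
  exact (summable_sum_mul_antidiagonal_of_summable_norm' has' has.summable hbs'
    hbs.summable).hasSum

variable [CompleteSpace 𝕜]

theorem hasFPowerSeriesOnBall (ha : HasPuncturedExpansion a f) :
    HasFPowerSeriesOnBall (ofScalars 𝕜 a).sum (ofScalars 𝕜 a) 0 (ofScalars 𝕜 a).radius :=
  (ofScalars 𝕜 a).hasFPowerSeriesOnBall ha.radius_pos

theorem eventuallyEq_sum (ha : HasPuncturedExpansion a f) :
    f =ᶠ[𝓝[≠] 0] (ofScalars 𝕜 a).sum := by
  filter_upwards [ha, ha.eventually_mem_eball] with s has hs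
  refine has.unique (((ofScalars 𝕜 a).hasSum hs).congr_fun fun n => ?_)
  rw [ofScalars_apply_eq, smul_eq_mul]

theorem tendsto (ha : HasPuncturedExpansion a f) : Tendsto f (𝓝[≠] 0) (𝓝 (a 0)) := by
  have hsum0 : (ofScalars 𝕜 a).sum 0 = a 0 :=
    (ofScalarsSum_zero (E := 𝕜) (c := a)).trans (mul_one _)
  have hcont := ha.hasFPowerSeriesOnBall.analyticAt.continuousAt
  rw [ContinuousAt, hsum0] at hcont
  exact (hcont.mono_left nhdsWithin_le_nhds).congr' ha.eventuallyEq_sum.symm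

theorem unique (ha : HasPuncturedExpansion a f) (hb : HasPuncturedExpansion b f) : a = b := by
  have hsum : (ofScalars 𝕜 a).sum =ᶠ[𝓝 0] (ofScalars 𝕜 b).sum :=
    (ha.hasFPowerSeriesOnBall.analyticAt.continuousAt.eventuallyEq_nhds_iff_eventuallyEq_nhdsNE
      hb.hasFPowerSeriesOnBall.analyticAt.continuousAt).mp
      (ha.eventuallyEq_sum.symm.trans hb.eventuallyEq_sum)
  exact ofScalars_series_injective 𝕜 𝕜 <|
    ha.hasFPowerSeriesOnBall.hasFPowerSeriesAt.eq_formalMultilinearSeries_of_eventually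
      hb.hasFPowerSeriesOnBall.hasFPowerSeriesAt hsum

theorem eventually_differentiableAt (ha : HasPuncturedExpansion a f) :
    ∀ᶠ s in 𝓝[≠] (0 : 𝕜), DifferentiableAt 𝕜 f s := by
  filter_upwards [eventually_nhdsNE_eventually_nhds_iff.mpr ha.eventuallyEq_sum,
    ha.eventually_mem_eball] with s hfs hs
  exact (ha.hasFPowerSeriesOnBall.analyticAt_of_mem hs).differentiableAt.congr_of_eventuallyEq hfs

theorem deriv (ha : HasPuncturedExpansion a f) :
    HasPuncturedExpansion (fun n => ((n : 𝕜) + 1) * a (n + 1)) (_root_.deriv f) := by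
  refine HasPuncturedExpansion.congr ?_ ha.eventuallyEq_sum.nhdsNE_deriv.symm
  filter_upwards [ha.eventually_mem_eball, self_mem_nhdsWithin] with s hs (hs0 : s ≠ 0)
  have hsum := (ContinuousLinearMap.apply 𝕜 𝕜 s).hasSum
    (ha.hasFPowerSeriesOnBall.fderiv.hasSum (y := s) (by simpa using hs))
  have hfderiv : fderiv 𝕜 (ofScalars 𝕜 a).sum s s = s * _root_.deriv (ofScalars 𝕜 a).sum s := by
    rw [← fderiv_apply_one_eq_deriv, ← smul_eq_mul, ← map_smul, smul_eq_mul, mul_one]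
  simp only [ContinuousLinearMap.apply_apply, zero_add, hfderiv] at hsum
  rw [← mul_div_cancel_left₀ (_root_.deriv (ofScalars 𝕜 a).sum s) hs0]
  refine (hsum.div_const s).congr_fun fun n => ?_
  rw [derivSeries_apply_diag, ofScalars_apply_eq, nsmul_eq_mul, smul_eq_mul]
  push_cast
  field_simp
  ring

theorem eventually_add_eq_of_eq_neg_logDeriv (hf : HasPuncturedExpansion c f)
    (hlog : ∀ᶠ s in 𝓝[≠] (0 : 𝕜), g s = -logDeriv (fun z => z⁻¹ + f z) s - s⁻¹) :
    ∀ᶠ s in 𝓝[≠] (0 : 𝕜), g s + f s = -(s * (g s * f s + _root_.deriv f s)) := by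
  have hlim : Tendsto (fun s => 1 + s * f s) (𝓝[≠] 0) (𝓝 (1 + 0 * c 0)) :=
    tendsto_const_nhds.add ((tendsto_id.mono_left nhdsWithin_le_nhds).mul hf.tendsto)
  have hne : ∀ᶠ s in 𝓝[≠] (0 : 𝕜), 1 + s * f s ≠ 0 := hlim.eventually_ne (by simp)
  filter_upwards [hlog, hne, hf.eventually_differentiableAt, self_mem_nhdsWithin]
    with s hgs hnes hdiff (hs0 : s ≠ 0)
  rw [hgs, logDeriv_apply, deriv_fun_add (differentiableAt_inv hs0) hdiff, deriv_inv]
  field_simp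
  ring

theorem coeff_recurrence_of_add_eq (hf : HasPuncturedExpansion c f)
    (hg : HasPuncturedExpansion e g)
    (hrel : ∀ᶠ s in 𝓝[≠] (0 : 𝕜), g s + f s = -(s * (g s * f s + _root_.deriv f s))) :
    e 0 = -c 0 ∧ ∀ n, e (n + 1) =
      -(((n : 𝕜) + 2) * c (n + 1)) - ∑ kl ∈ antidiagonal n, e kl.1 * c kl.2 := by
  have hlhs := hg.add hf
  have hrhs := ((hg.mul hf).add hf.deriv).neg
  have hconst : e 0 + c 0 = 0 := by
    refine tendsto_nhds_unique hlhs.tendsto ?_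
    have hlim := (tendsto_id.mono_left nhdsWithin_le_nhds).mul hrhs.tendsto
    rw [zero_mul] at hlim
    refine hlim.congr' ?_
    filter_upwards [hrel] with s hs
    simp only [id_eq, Pi.add_apply, Pi.neg_apply, Pi.mul_apply, hs]
    ring
  have hshift : HasPuncturedExpansion (fun n => (e + c) (n + 1))
      (-(g * f + _root_.deriv f)) := by
    refine hlhs.shift.congr ?_
    filter_upwards [hrel, self_mem_nhdsWithin] with s hs (hs0 : s ≠ 0)
    simp only [Pi.add_apply, Pi.neg_apply, Pi.mul_apply, hconst, hs, sub_zero]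
    field_simp
  refine ⟨by linear_combination hconst, fun n => ?_⟩
  have hn := congrFun (hshift.unique hrhs) n
  simp only [Pi.add_apply, Pi.neg_apply] at hn
  linear_combination hn

end HasPuncturedExpansion

/-- with `ζ(s+1) = 1/s + Σ γ_n s^n` and `-ζ'(s+1)/ζ(s+1) = 1/s + Σ η_n s^n`
near `s = 0`, one has `η_2 = −γ_0³ + 3γ_0γ_1 − 3γ_2`. -/
theorem eta_two_eq (γ η : ℕ → ℂ)
    (hγ : ∀ᶠ s in nhdsWithin (0 : ℂ) {0}ᶜ,
      HasSum (fun n : ℕ => γ n * s ^ n) (riemannZeta (s + 1) - 1 / s))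
    (hη : ∀ᶠ s in nhdsWithin (0 : ℂ) {0}ᶜ,
      HasSum (fun n : ℕ => η n * s ^ n)
        (-(deriv riemannZeta (s + 1) / riemannZeta (s + 1)) - 1 / s)) :
    η 2 = -(γ 0 ^ 3) + 3 * γ 0 * γ 1 - 3 * γ 2 := by
  have hζ : (fun z : ℂ => z⁻¹ + (riemannZeta (z + 1) - 1 / z)) = fun z => riemannZeta (z + 1) := by
    funext z
    ring
  obtain ⟨h0, hsucc⟩ := HasPuncturedExpansion.coeff_recurrence_of_add_eq hγ hη <|
    HasPuncturedExpansion.eventually_add_eq_of_eq_neg_logDeriv hγ <|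
      .of_forall fun s => by rw [hζ, logDeriv_apply, deriv_comp_add_const, one_div]
  rw [hsucc 1, Finset.Nat.sum_antidiagonal_succ, Finset.Nat.antidiagonal_zero, sum_singleton,
    hsucc 0, Finset.Nat.antidiagonal_zero, sum_singleton, h0]
  push_cast
  ring
end

section
/- With η_n and γ_n the Laurent expansion coefficients of −ζ'/ζ and ζ at s=1, one has η_3 = γ_0^4 − 4γ_0^2γ_1 + 2γ_1^2 + 4γ_0γ_2 − 4γ_3. -/
/-!
Put `G(s) = ∑ γₙ sⁿ` and `H(s) = ∑ ηₙ sⁿ`, so that `F(s) = ζ(s+1) = 1/s + G(s)` and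
`-F'/F = 1/s + H`. Substituting `F' = -1/s² + G'` into `F' = -(1/s + H) F` and multiplying by `s`
gives `s G' + G + H + s H G = 0` on a punctured disc, and comparing coefficients yields
`γ₀ + η₀ = 0` and `(n + 2) γₙ₊₁ + ηₙ₊₁ + ∑_{k+l=n} η_k γ_l = 0`. The first four of these determine
`η₀, …, η₃` in terms of the `γₙ`. The pole makes `ζ(s+1)` nonvanishing near `0`, so `ζ'/ζ` is
not a junk value there.
-/

open Filter Finset FormalMultilinearSeries
open scoped Topology

section ScalarPowerSeries

variable {𝕜 : Type*} [NontriviallyNormedField 𝕜] {c : ℕ → 𝕜} {s : 𝕜}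

theorem FormalMultilinearSeries.ofScalars_radius_pos_of_summable (hs : s ≠ 0)
    (h : Summable fun n => c n * s ^ n) : 0 < (ofScalars 𝕜 c).radius := by
  have h_tendsto : Tendsto (fun n => ‖ofScalars 𝕜 c n‖ * (‖s‖₊ : ℝ) ^ n) atTop (𝓝 0) := by
    simpa [ofScalars_norm, norm_mul, norm_pow] using h.tendsto_atTop_zero.norm
  exact lt_of_lt_of_le (by simpa using hs) ((ofScalars 𝕜 c).le_radius_of_tendsto h_tendsto)

theorem FormalMultilinearSeries.summable_norm_mul_pow_of_lt_radius
    (hs : ‖s‖ₑ < (ofScalars 𝕜 c).radius) : Summable fun n => ‖c n * s ^ n‖ := by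
  have h := (ofScalars 𝕜 c).summable_norm_mul_pow (r := ‖s‖₊) hs
  simp only [ofScalars_norm, coe_nnnorm] at h
  simpa only [norm_mul, norm_pow] using h

variable [CompleteSpace 𝕜]

theorem FormalMultilinearSeries.hasSum_ofScalarsSum (hs : ‖s‖ₑ < (ofScalars 𝕜 c).radius) :
    HasSum (fun n => c n * s ^ n) (ofScalarsSum c s) := by
  have h := (ofScalars 𝕜 c).hasSum (x := s) (by simpa using hs)
  simp only [ofScalars_apply_eq, smul_eq_mul] at h
  exact h

theorem FormalMultilinearSeries.hasSum_mul_deriv_ofScalarsSum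
    (hs : ‖s‖ₑ < (ofScalars 𝕜 c).radius) :
    HasSum (fun n => (n + 1) * c (n + 1) * s ^ (n + 1)) (s * deriv (ofScalarsSum c) s) := by
  have h := (((ofScalars 𝕜 c).hasFPowerSeriesOnBall (zero_le.trans_lt hs)).fderiv.hasSum
    (y := s) (by simpa using hs)).mapL (ContinuousLinearMap.apply 𝕜 𝕜 s)
  have h_terms : ∀ n : ℕ, (ofScalars 𝕜 c).derivSeries n (fun _ => s) s
      = (n + 1) * c (n + 1) * s ^ (n + 1) := fun n => by
    rw [derivSeries_apply_diag, ofScalars_apply_eq, nsmul_eq_mul, smul_eq_mul]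
    push_cast
    ring
  have h_sum : fderiv 𝕜 (ofScalars 𝕜 c).sum (0 + s) s = s * deriv (ofScalarsSum c) s := by
    rw [zero_add, ← toSpanSingleton_deriv]
    simp [ofScalarsSum]
  simp only [ContinuousLinearMap.apply_apply, h_terms, h_sum] at h
  exact h

theorem FormalMultilinearSeries.eq_zero_of_eventually_hasSum_zero
    (h : ∀ᶠ s in 𝓝[≠] (0 : 𝕜), HasSum (fun n => c n * s ^ n) 0) (n : ℕ) : c n = 0 := by
  obtain ⟨s₀, hs₀, hs₀_ne⟩ := (h.and self_mem_nhdsWithin).exists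
  have hr := ofScalars_radius_pos_of_summable hs₀_ne hs₀.summable
  have hp := ((ofScalars 𝕜 c).hasFPowerSeriesOnBall hr).hasFPowerSeriesAt
  have h_sum : ∀ᶠ s in 𝓝[≠] (0 : 𝕜), ofScalarsSum c s = 0 := by
    filter_upwards [h, nhdsWithin_le_nhds (Metric.eball_mem_nhds 0 hr)] with s hs hsr
    exact (hasSum_ofScalarsSum (by simpa using hsr)).unique hs
  have h_series : ofScalars 𝕜 c = 0 := hp.eq_zero_of_eventually
    (hp.analyticAt.frequently_zero_iff_eventually_zero.mp h_sum.frequently)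
  exact (ofScalars_eq_zero 𝕜 n).mp (by rw [h_series]; rfl)

theorem hasSum_sum_antidiagonal_mul_pow {a b : ℕ → 𝕜} {A B : 𝕜}
    (ha : HasSum (fun n => a n * s ^ n) A) (hb : HasSum (fun n => b n * s ^ n) B)
    (ha' : Summable fun n => ‖a n * s ^ n‖) (hb' : Summable fun n => ‖b n * s ^ n‖) :
    HasSum (fun n => (∑ kl ∈ antidiagonal n, a kl.1 * b kl.2) * s ^ n) (A * B) := by
  have h := (summable_norm_sum_mul_antidiagonal_of_summable_norm ha' hb').of_norm.hasSum
  rw [← tsum_mul_tsum_eq_tsum_sum_antidiagonal_of_summable_norm ha' hb', ha.tsum_eq,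
    hb.tsum_eq] at h
  have h_terms : ∀ n, (∑ kl ∈ antidiagonal n, a kl.1 * b kl.2) * s ^ n
      = ∑ kl ∈ antidiagonal n, a kl.1 * s ^ kl.1 * (b kl.2 * s ^ kl.2) := fun n => by
    rw [sum_mul]
    refine sum_congr rfl fun kl hkl => ?_
    rw [← mem_antidiagonal.mp hkl, pow_add]
    ring
  simpa only [h_terms] using h

end ScalarPowerSeries

section LogDerivRelation

variable {𝕜 : Type*} [NontriviallyNormedField 𝕜]

theorem eventually_ne_zero_of_eventually_eq_inv_add {F G : 𝕜 → 𝕜} (hG : ContinuousAt G 0)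
    (hF : ∀ᶠ s in 𝓝[≠] 0, F s = s⁻¹ + G s) : ∀ᶠ s in 𝓝[≠] 0, F s ≠ 0 := by
  have h_lim : Tendsto (fun s => 1 + s * G s) (𝓝 0) (𝓝 1) := by
    have h_cont : ContinuousAt (fun s => 1 + s * G s) 0 := by fun_prop
    simpa using h_cont.tendsto
  filter_upwards [hF, self_mem_nhdsWithin,
    nhdsWithin_le_nhds (h_lim.eventually_ne one_ne_zero)] with s hFs hs hne
  have h_mul : s * F s = 1 + s * G s := by
    rw [hFs, mul_add, mul_inv_cancel₀ hs]
  exact right_ne_zero_of_mul (h_mul ▸ hne)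

theorem logDerivRelation_of_eq_inv_add {s f f' g g' h : 𝕜} (hs : s ≠ 0)
    (hf : f ≠ 0) (hfg : f = s⁻¹ + g) (hfg' : f' = -(s ^ 2)⁻¹ + g')
    (hh : -(f' / f) - 1 / s = h) : s * g' + g + h + s * (h * g) = 0 := by
  have h_mul : h * f = -f' - f / s := by
    rw [← hh]
    field_simp
  rw [hfg, hfg'] at h_mul
  field_simp at h_mul
  refine mul_left_cancel₀ hs ?_
  linear_combination h_mul

/-- The `n`-th coefficient of `s G' + G + H + s H G`, for `G = ∑ γₙ sⁿ` and `H = ∑ ηₙ sⁿ`. -/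
def logDerivRelationCoeff (γ η : ℕ → 𝕜) : ℕ → 𝕜
  | 0 => γ 0 + η 0
  | n + 1 => (n + 2) * γ (n + 1) + η (n + 1) + ∑ kl ∈ antidiagonal n, η kl.1 * γ kl.2

variable [CompleteSpace 𝕜]

theorem hasSum_logDerivRelationCoeff {γ η : ℕ → 𝕜} {s G H D : 𝕜}
    (hG : HasSum (fun n => γ n * s ^ n) G) (hH : HasSum (fun n => η n * s ^ n) H)
    (hD : HasSum (fun n => (n + 1) * γ (n + 1) * s ^ (n + 1)) D)
    (hγ : Summable fun n => ‖γ n * s ^ n‖) (hη : Summable fun n => ‖η n * s ^ n‖) :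
    HasSum (fun n => logDerivRelationCoeff γ η n * s ^ n) (D + G + H + s * (H * G)) := by
  have hHG := (hasSum_sum_antidiagonal_mul_pow hH hG hη hγ).mul_left s
  have hG₁ := (hasSum_nat_add_iff' 1).mpr hG
  have hH₁ := (hasSum_nat_add_iff' 1).mpr hH
  have h_terms : (fun n => logDerivRelationCoeff γ η (n + 1) * s ^ (n + 1)) = fun n =>
      (n + 1) * γ (n + 1) * s ^ (n + 1) + s * ((∑ kl ∈ antidiagonal n, η kl.1 * γ kl.2) * s ^ n)
        + γ (n + 1) * s ^ (n + 1) + η (n + 1) * s ^ (n + 1) := by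
    ext n
    simp only [logDerivRelationCoeff]
    ring
  have h_value : D + G + H + s * (H * G) - ∑ i ∈ range 1, logDerivRelationCoeff γ η i * s ^ i
      = D + s * (H * G) + (G - ∑ i ∈ range 1, γ i * s ^ i) + (H - ∑ i ∈ range 1, η i * s ^ i) := by
    simp only [logDerivRelationCoeff, range_one, sum_singleton]
    ring
  rw [← hasSum_nat_add_iff' 1, h_terms, h_value]
  exact ((hD.add hHG).add hG₁).add hH₁

theorem logDerivRelationCoeff_eq_zero {F : 𝕜 → 𝕜} {γ η : ℕ → 𝕜}
    (hγ : ∀ᶠ s in 𝓝[≠] (0 : 𝕜), HasSum (fun n => γ n * s ^ n) (F s - 1 / s))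
    (hη : ∀ᶠ s in 𝓝[≠] (0 : 𝕜), HasSum (fun n => η n * s ^ n) (-(deriv F s / F s) - 1 / s))
    (n : ℕ) : logDerivRelationCoeff γ η n = 0 := by
  refine eq_zero_of_eventually_hasSum_zero ?_ n
  set G : 𝕜 → 𝕜 := ofScalarsSum γ
  set H : 𝕜 → 𝕜 := ofScalarsSum η
  obtain ⟨s₀, hγ₀, hη₀, hs₀⟩ := (hγ.and (hη.and eventually_mem_nhdsWithin)).exists
  have hrγ := ofScalars_radius_pos_of_summable hs₀ hγ₀.summable
  have hrη := ofScalars_radius_pos_of_summable hs₀ hη₀.summable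
  have h_ball : ∀ᶠ s in 𝓝 (0 : 𝕜),
      ‖s‖ₑ < (ofScalars 𝕜 γ).radius ∧ ‖s‖ₑ < (ofScalars 𝕜 η).radius := by
    filter_upwards [Metric.eball_mem_nhds 0 hrγ, Metric.eball_mem_nhds 0 hrη] with s hsγ hsη
    exact ⟨by simpa using hsγ, by simpa using hsη⟩
  have hF : ∀ᶠ s in 𝓝[≠] 0, F s = s⁻¹ + G s := by
    filter_upwards [hγ, nhdsWithin_le_nhds h_ball] with s hs hr
    rw [show G s = F s - 1 / s from (hasSum_ofScalarsSum hr.1).unique hs]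
    ring
  have hF_ne := eventually_ne_zero_of_eventually_eq_inv_add
    ((ofScalars 𝕜 γ).hasFDerivAt_sum (by simpa using hrγ)).continuousAt hF
  have hF' : ∀ᶠ s in 𝓝[≠] 0, deriv F s = -(s ^ 2)⁻¹ + deriv G s := by
    filter_upwards [eventually_nhdsNE_eventually_nhds_iff.mpr hF, self_mem_nhdsWithin,
      nhdsWithin_le_nhds h_ball] with s hFs hs hr
    rw [Filter.EventuallyEq.deriv_eq hFs]
    exact ((hasDerivAt_inv hs).add
      ((ofScalars 𝕜 γ).hasFDerivAt_sum hr.1).differentiableAt.hasDerivAt).deriv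
  filter_upwards [hF, hF', hF_ne, hη, self_mem_nhdsWithin, nhdsWithin_le_nhds h_ball]
    with s hFs hF's hne hηs hs hr
  have h_rel := logDerivRelation_of_eq_inv_add hs hne hFs hF's
    ((hasSum_ofScalarsSum hr.2).unique hηs).symm
  exact h_rel ▸ hasSum_logDerivRelationCoeff (hasSum_ofScalarsSum hr.1)
    (hasSum_ofScalarsSum hr.2) (hasSum_mul_deriv_ofScalarsSum hr.1)
    (summable_norm_mul_pow_of_lt_radius hr.1) (summable_norm_mul_pow_of_lt_radius hr.2)

end LogDerivRelation

/-- with `ζ(s+1) = 1/s + Σ γ_n s^n` and `-ζ'(s+1)/ζ(s+1) = 1/s + Σ η_n s^n`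
near `s = 0`, one has `η_3 = γ_0⁴ − 4γ_0²γ_1 + 2γ_1² + 4γ_0γ_2 − 4γ_3`. -/
theorem eta_three_eq (γ η : ℕ → ℂ)
    (hγ : ∀ᶠ s in nhdsWithin (0 : ℂ) {0}ᶜ,
      HasSum (fun n : ℕ => γ n * s ^ n) (riemannZeta (s + 1) - 1 / s))
    (hη : ∀ᶠ s in nhdsWithin (0 : ℂ) {0}ᶜ,
      HasSum (fun n : ℕ => η n * s ^ n)
        (-(deriv riemannZeta (s + 1) / riemannZeta (s + 1)) - 1 / s)) :
    η 3 = γ 0 ^ 4 - 4 * γ 0 ^ 2 * γ 1 + 2 * γ 1 ^ 2 + 4 * γ 0 * γ 2 - 4 * γ 3 := by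
  have h_rel := logDerivRelationCoeff_eq_zero (F := fun s => riemannZeta (s + 1)) hγ
    (hη.mono fun s hs => by rwa [deriv_comp_add_const])
  have e0 := h_rel 0
  have e1 := h_rel 1
  have e2 := h_rel 2
  have e3 := h_rel 3
  simp only [logDerivRelationCoeff, Nat.sum_antidiagonal_succ, Nat.antidiagonal_zero,
    sum_singleton, Nat.reduceAdd] at e0 e1 e2 e3
  linear_combination e3 - γ 0 * e2 + (γ 0 ^ 2 - γ 1) * e1 + (2 * γ 0 * γ 1 - γ 2 - γ 0 ^ 3) * e0
end

section
/- The oscillating part λ̃_n := (1/Γ(n)) d^n/ds^n [s^{n-1} log((s−1)ζ(s))]|_{s=1} satisfies λ̃_n = −Σ_{j=1}^{n} C(n,j) η_{j−1}, where η_m are the Laurent coefficients of −ζ'(s+1)/ζ(s+1) = 1/s + Σ η_m s^m. -/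
/-!
Put `L(s) = log ((s - 1) ζ(s))`, analytic at `s = 1` with `L(1) = 0`. Its derivative is
`1/(s - 1) + ζ'(s)/ζ(s)`, so the hypothesis on `η` says exactly that `-L'(1 + t) = Σ η_m t^m`,
whence `L^{(m+1)}(1) = -m! η_m`. The Leibniz rule applied to `s^(n-1) L(s)` at `s = 1` then
gives the formula: the term in which all `n` derivatives fall on `s^(n-1)` vanishes, and in the
term containing `L^{(m+1)}(1)` the factor `m! · (n-1)(n-2)⋯(m+1) = (n-1)!` cancels `Γ(n)`.
-/

open Filter Complex Finset

/-- The oscillating part of the Li coefficients: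
`λ̃_n = (1/Γ(n)) dⁿ/dsⁿ [s^(n-1) log((s−1)ζ(s))]` at `s = 1`. -/
noncomputable def liOsc (n : ℕ) : ℂ :=
  (1 / Complex.Gamma n) *
    iteratedDeriv n (fun s : ℂ => s ^ (n - 1) * Complex.log ((s - 1) * riemannZeta s)) 1

open scoped Topology Nat

section IteratedDeriv

variable {𝕜 : Type*} [NontriviallyNormedField 𝕜]

theorem FormalMultilinearSeries.radius_ofScalars_pos_of_summable {a : ℕ → 𝕜} {t : 𝕜} (ht : t ≠ 0)
    (h : Summable fun m => a m * t ^ m) : 0 < (FormalMultilinearSeries.ofScalars 𝕜 a).radius := by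
  refine lt_of_lt_of_le (by simpa using ht)
    (FormalMultilinearSeries.le_radius_of_tendsto (r := ‖t‖₊) _ (l := 0) ?_)
  simpa [FormalMultilinearSeries.ofScalars_norm] using h.tendsto_atTop_zero.norm

theorem iteratedDeriv_succ_pow_mul {f : 𝕜 → 𝕜} {x : 𝕜} {k : ℕ}
    (hf : ContDiffAt 𝕜 (k + 1) f x) :
    iteratedDeriv (k + 1) (fun s => s ^ k * f s) x = ∑ j ∈ range (k + 1),
      (k + 1).choose (j + 1) * k.descFactorial (k - j) * x ^ j * iteratedDeriv (j + 1) f x := by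
  simp_rw [mul_comm _ (f _)]
  rw [iteratedDeriv_fun_mul (mod_cast hf) (by fun_prop), sum_range_succ']
  simp only [iteratedDeriv_pow, Nat.sub_zero, Nat.descFactorial_of_lt k.lt_succ_self,
    Nat.cast_zero, zero_mul, mul_zero, add_zero]
  refine sum_congr rfl fun j hj => ?_
  rw [Nat.add_sub_add_right, Nat.sub_sub_self (mem_range_succ_iff.mp hj)]
  ring

variable [CompleteSpace 𝕜] [CharZero 𝕜]

theorem iteratedDeriv_eq_factorial_mul_of_hasSum {f : 𝕜 → 𝕜} {a : ℕ → 𝕜}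
    (hf : AnalyticAt 𝕜 f 0) (ha : ∀ᶠ t in 𝓝[≠] 0, HasSum (fun m => a m * t ^ m) (f t)) (m : ℕ) :
    iteratedDeriv m f 0 = m ! * a m := by
  set P := FormalMultilinearSeries.ofScalars 𝕜 a
  obtain ⟨t, hsum, ht⟩ := (ha.and self_mem_nhdsWithin).exists
  have hP : HasFPowerSeriesAt P.sum P 0 := (P.hasFPowerSeriesOnBall
    (FormalMultilinearSeries.radius_ofScalars_pos_of_summable ht hsum.summable)).hasFPowerSeriesAt
  have hfP : f =ᶠ[𝓝 0] P.sum := by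
    refine (hf.frequently_eq_iff_eventually_eq hP.analyticAt).mp (Eventually.frequently ?_)
    filter_upwards [ha, nhdsWithin_le_nhds hP.eventually_hasSum] with s hfs hPs
    simp only [P, FormalMultilinearSeries.ofScalars_apply_eq, smul_eq_mul, zero_add] at hPs
    exact hfs.unique hPs
  have hcoeff := congrFun (FormalMultilinearSeries.ofScalars_series_injective 𝕜 𝕜
    (hf.hasFPowerSeriesAt.eq_formalMultilinearSeries (hP.congr hfP.symm))) m
  rw [div_eq_iff (mod_cast m.factorial_ne_zero)] at hcoeff
  rw [hcoeff, mul_comm]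

end IteratedDeriv

theorem analyticAt_update_sub_one_mul_riemannZeta :
    AnalyticAt ℂ (Function.update (fun s => (s - 1) * riemannZeta s) 1 1) 1 := by
  refine analyticAt_of_differentiable_on_punctured_nhds_of_continuousAt ?_ ?_
  · filter_upwards [self_mem_nhdsWithin] with s (hs : s ≠ 1)
    refine ((differentiableAt_id.sub_const 1).mul
      (differentiableAt_riemannZeta hs)).congr_of_eventuallyEq ?_
    filter_upwards [isOpen_ne.mem_nhds hs] with w hw
    exact Function.update_of_ne hw _ _
  · simpa only [continuousAt_update_same] using riemannZeta_residue_one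

theorem analyticAt_log_sub_one_mul_riemannZeta :
    AnalyticAt ℂ (fun s => log ((s - 1) * riemannZeta s)) 1 := by
  -- at `s = 1` the junk value `log (0 * ζ 1) = log 0 = 0` happens to agree with `log 1`
  have hlog : (fun s => log ((s - 1) * riemannZeta s)) =
      log ∘ Function.update (fun s => (s - 1) * riemannZeta s) 1 1 := by
    ext s
    rcases eq_or_ne s 1 with rfl | hs
    · simp
    · simp [Function.update_of_ne hs]
  rw [hlog]
  exact (analyticAt_clog (by simp)).comp analyticAt_update_sub_one_mul_riemannZeta

theorem deriv_log_sub_one_mul_riemannZeta :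
    ∀ᶠ s in 𝓝[≠] (1 : ℂ), deriv (fun s => log ((s - 1) * riemannZeta s)) s =
      1 / (s - 1) + deriv riemannZeta s / riemannZeta s := by
  filter_upwards [self_mem_nhdsWithin,
    riemannZeta_residue_one.eventually (isOpen_slitPlane.mem_nhds one_mem_slitPlane)]
    with s (hs : s ≠ 1) hslit
  have hderiv := (((hasDerivAt_id' s).sub_const 1).fun_mul
    (differentiableAt_riemannZeta hs).hasDerivAt).clog hslit
  have hζ : riemannZeta s ≠ 0 := right_ne_zero_of_mul (slitPlane_ne_zero hslit)
  have hs' : s - 1 ≠ 0 := sub_ne_zero.mpr hs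
  rw [hderiv.deriv]
  field_simp

theorem iteratedDeriv_succ_log_sub_one_mul_riemannZeta (η : ℕ → ℂ)
    (hη : ∀ᶠ s in 𝓝[≠] (0 : ℂ),
      HasSum (fun m => η m * s ^ m) (-(deriv riemannZeta (s + 1) / riemannZeta (s + 1)) - 1 / s))
    (m : ℕ) :
    iteratedDeriv (m + 1) (fun s => log ((s - 1) * riemannZeta s)) 1 = -(m ! * η m) := by
  set L : ℂ → ℂ := fun s => log ((s - 1) * riemannZeta s)
  have hderiv : ∀ᶠ t in 𝓝[≠] (0 : ℂ),
      deriv L (1 + t) = 1 / t + deriv riemannZeta (t + 1) / riemannZeta (t + 1) := by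
    have h := deriv_log_sub_one_mul_riemannZeta
    rw [← add_zero (1 : ℂ), ← map_add_left_nhdsNE, eventually_map] at h
    simpa [add_comm] using h
  have key := iteratedDeriv_eq_factorial_mul_of_hasSum (f := fun t => -deriv L (1 + t)) (a := η)
    ((analyticAt_log_sub_one_mul_riemannZeta.deriv.comp_of_eq (by fun_prop) (add_zero 1)).neg) ?_ m
  · rw [iteratedDeriv_fun_neg, congrFun (iteratedDeriv_comp_const_add m (deriv L) 1) 0,
      add_zero, ← iteratedDeriv_succ'] at key
    exact neg_eq_iff_eq_neg.mp key
  · filter_upwards [hη, hderiv] with t hηt hLt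
    rwa [hLt, neg_add, add_comm, ← sub_eq_add_neg]

/-- with `η_m` the Laurent coefficients of
`-ζ'(s+1)/ζ(s+1) = 1/s + Σ η_m s^m` near `0`, for every `n ≥ 1`,
`λ̃_n = −Σ_{j=1}^n C(n,j) η_{j−1}`. -/
theorem liOsc_eq (η : ℕ → ℂ)
    (hη : ∀ᶠ s in nhdsWithin (0 : ℂ) {0}ᶜ,
      HasSum (fun m : ℕ => η m * s ^ m)
        (-(deriv riemannZeta (s + 1) / riemannZeta (s + 1)) - 1 / s))
    (n : ℕ) (hn : 1 ≤ n) :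
    liOsc n = -∑ j ∈ Finset.Icc 1 n, (n.choose j : ℂ) * η (j - 1) := by
  obtain ⟨k, rfl⟩ := Nat.exists_eq_add_of_le' hn
  have hreindex : ∑ j ∈ Icc 1 (k + 1), ((k + 1).choose j : ℂ) * η (j - 1) =
      ∑ j ∈ range (k + 1), ((k + 1).choose (j + 1) : ℂ) * η j := by
    have h := sum_Ico_add' (fun j => ((k + 1).choose j : ℂ) * η (j - 1)) 0 (k + 1) 1
    rw [zero_add, Ico_add_one_right_eq_Icc 1 (k + 1)] at h
    rw [← h, range_eq_Ico]
    rfl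
  rw [liOsc, Nat.add_sub_cancel, Nat.cast_succ, Gamma_nat_eq_factorial,
    iteratedDeriv_succ_pow_mul analyticAt_log_sub_one_mul_riemannZeta.contDiffAt, hreindex,
    mul_sum, ← sum_neg_distrib]
  refine sum_congr rfl fun j hj => ?_
  have hfact : (j ! * k.descFactorial (k - j) : ℂ) = k ! := by
    exact_mod_cast (by simpa [Nat.sub_sub_self (mem_range_succ_iff.mp hj)] using
      Nat.factorial_mul_descFactorial (Nat.sub_le k j))
  rw [iteratedDeriv_succ_log_sub_one_mul_riemannZeta η hη, one_pow]
  field_simp [(Nat.cast_ne_zero.mpr k.factorial_ne_zero : (k ! : ℂ) ≠ 0)]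
  linear_combination -((k + 1).choose (j + 1) : ℂ) * η j * hfact
end
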